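/- Let n ∈ ℕ and f : 𝕊 → GL_n(ℂ). Suppose f(z) = A₊(z)D(z)A₋(z) = Ã₊(z)D̃(z)Ã₋(z) for all z ∈ 𝕊, where: A₊, Ã₊ : 𝔻̄ → M_n(ℂ) are continuous, holomorphic on 𝔻, with invertible values; A₋, Ã₋ : {z ∈ ℂ : |z| ≥ 1} → M_n(ℂ) are continuous, holomorphic on {z : |z| > 1}, with invertible values and invertible limits at ∞; and D(z) = diag(z^{κ₁},…,z^{κ_n}), D̃(z) = diag(z^{ν₁},…,z^{ν_n}) with κ₁ ≥ ⋯ ≥ κ_n and ν₁ ≥ ⋯ ≥ ν_n integers. If the restrictions A₊|_𝕊 and A₋|_𝕊 are smooth (C^∞) maps on the circle, then also Ã₊|_𝕊 and Ã₋|_𝕊 are smooth. -/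

import Mathlib

open Metric Filter

/-- The diagonal matrix `D(z) = diag(z^{κ₁}, …, z^{κ_n})`. -/
noncomputable def diagZ (n : ℕ) (κ : Fin n → ℤ) (z : ℂ) : Matrix (Fin n) (Fin n) ℂ :=
  Matrix.diagonal fun i => z ^ κ i

/-- The parametrization `t ↦ e^{2πit}` of the unit circle. -/
noncomputable def circleParam (t : ℝ) : ℂ :=
  Complex.exp (2 * (Real.pi : ℂ) * Complex.I * (t : ℂ))

section aux
open Complex
variable {n : ℕ}



/-- Finset sum version of ContDiff prod. -/
theorem contDiff_finset_prod {ι : Type*} {f : ι → ℝ → ℂ} {s : Finset ι}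
    (h : ∀ i ∈ s, ContDiff ℝ (⊤ : ℕ∞) (f i)) :
    ContDiff ℝ (⊤ : ℕ∞) (fun t => ∏ i ∈ s, f i t) := by
  classical
  induction s using Finset.induction with
  | empty => simpa using contDiff_const
  | insert _ _ hx ih =>
    rename_i a s
    simp only [Finset.prod_insert hx]
    exact (h a (Finset.mem_insert_self a s)).mul
      (ih fun i hi => h i (Finset.mem_insert_of_mem hi))

theorem contDiff_det {A : ℝ → Matrix (Fin n) (Fin n) ℂ}
    (h : ∀ i j, ContDiff ℝ (⊤ : ℕ∞) fun t => A t i j) :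
    ContDiff ℝ (⊤ : ℕ∞) fun t => (A t).det := by
  simp only [Matrix.det_apply, Units.smul_def, zsmul_eq_mul]
  exact ContDiff.sum fun σ _ => contDiff_const.mul
    (contDiff_finset_prod fun i _ => h (σ i) i)

theorem diffOn_finset_prod {ι : Type*} {f : ι → ℂ → ℂ} {s : Finset ι} {u : Set ℂ}
    (h : ∀ i ∈ s, DifferentiableOn ℂ (f i) u) :
    DifferentiableOn ℂ (fun z => ∏ i ∈ s, f i z) u :=
  DifferentiableOn.fun_finsetProd h

theorem diffOn_det {A : ℂ → Matrix (Fin n) (Fin n) ℂ} {s : Set ℂ}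
    (h : ∀ i j, DifferentiableOn ℂ (fun z => A z i j) s) :
    DifferentiableOn ℂ (fun z => (A z).det) s := by
  simp only [Matrix.det_apply, Units.smul_def, zsmul_eq_mul]
  exact DifferentiableOn.fun_sum fun σ _ => (differentiableOn_const _).mul
    (DifferentiableOn.fun_finsetProd fun i _ => h (σ i) i)

theorem contOn_det {A : ℂ → Matrix (Fin n) (Fin n) ℂ} {s : Set ℂ}
    (h : ∀ i j, ContinuousOn (fun z => A z i j) s) :
    ContinuousOn (fun z => (A z).det) s := by
  have hA : ContinuousOn A s := continuousOn_pi.2 fun i => continuousOn_pi.2 fun j => h i j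
  exact (continuous_id.matrix_det).comp_continuousOn hA

theorem contDiff_adjugate {A : ℝ → Matrix (Fin n) (Fin n) ℂ}
    (h : ∀ i j, ContDiff ℝ (⊤ : ℕ∞) fun t => A t i j) (i j : Fin n) :
    ContDiff ℝ (⊤ : ℕ∞) fun t => (A t).adjugate i j := by
  simp only [Matrix.adjugate_apply]
  exact contDiff_det (A := fun t => (A t).updateRow j (Pi.single i 1)) (fun k l => by
    rcases eq_or_ne k j with rfl | hk
    · simpa [Matrix.updateRow_apply] using contDiff_const
    · simpa [Matrix.updateRow_apply, hk] using h k l)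

theorem diffOn_adjugate {A : ℂ → Matrix (Fin n) (Fin n) ℂ} {s : Set ℂ}
    (h : ∀ i j, DifferentiableOn ℂ (fun z => A z i j) s) (i j : Fin n) :
    DifferentiableOn ℂ (fun z => (A z).adjugate i j) s := by
  simp only [Matrix.adjugate_apply]
  exact diffOn_det (A := fun z => (A z).updateRow j (Pi.single i 1)) (fun k l => by
    rcases eq_or_ne k j with rfl | hk
    · simpa [Matrix.updateRow_apply] using differentiableOn_const _
    · simpa [Matrix.updateRow_apply, hk] using h k l)

theorem contOn_adjugate {A : ℂ → Matrix (Fin n) (Fin n) ℂ} {s : Set ℂ}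
    (h : ∀ i j, ContinuousOn (fun z => A z i j) s) (i j : Fin n) :
    ContinuousOn (fun z => (A z).adjugate i j) s := by
  have hA : ContinuousOn A s := continuousOn_pi.2 fun i => continuousOn_pi.2 fun j => h i j
  have : Continuous fun M : Matrix (Fin n) (Fin n) ℂ => M.adjugate i j :=
    ((continuous_apply j).comp (continuous_apply i)).comp continuous_id.matrix_adjugate
  exact this.comp_continuousOn hA

/-- Inverse matrix entry formula. -/
theorem inv_entry (A : Matrix (Fin n) (Fin n) ℂ) (i j : Fin n) :
    A⁻¹ i j = (A.det)⁻¹ * A.adjugate i j := by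
  rw [Matrix.inv_def, Matrix.smul_apply, Ring.inverse_eq_inv', smul_eq_mul]



theorem circleIntegral_finset_sum {ι : Type*} (s : Finset ι) (f : ι → ℂ → ℂ)
    (h : ∀ i ∈ s, CircleIntegrable (f i) 0 1) :
    (∮ z in C(0, 1), ∑ i ∈ s, f i z) = ∑ i ∈ s, ∮ z in C(0, 1), f i z := by
  simp only [circleIntegral, Finset.smul_sum]
  exact intervalIntegral.integral_finset_sum (fun i hi => (h i hi).out)

theorem bounded_of_tendsto (v : ℂ → ℂ) (L : ℂ)
    (hvc : ContinuousOn v {z : ℂ | 1 ≤ ‖z‖})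
    (hvl : Tendsto v (comap (fun z : ℂ => ‖z‖) atTop) (nhds L)) :
    ∃ C : ℝ, 0 ≤ C ∧ ∀ z : ℂ, 1 ≤ ‖z‖ → ‖v z‖ ≤ C := by
  have h1 : ∀ᶠ z in comap (fun z : ℂ => ‖z‖) atTop, v z ∈ closedBall L 1 :=
    hvl (closedBall_mem_nhds L one_pos)
  rw [eventually_comap] at h1
  rw [eventually_atTop] at h1
  obtain ⟨M, hM⟩ := h1
  set R : ℝ := max M 1 with hR
  have hK : IsCompact (closedBall (0:ℂ) R \ ball (0:ℂ) 1) :=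
    (isCompact_closedBall _ _).diff isOpen_ball
  obtain ⟨C₀, hC₀⟩ := hK.exists_bound_of_continuousOn (hvc.mono (by
    intro z hz
    simp only [Set.mem_diff, mem_closedBall, mem_ball, dist_zero_right, not_lt,
      Set.mem_setOf_eq] at hz ⊢
    exact hz.2))
  refine ⟨max C₀ (‖L‖ + 1), le_trans (by positivity) (le_max_right _ _), fun z hz => ?_⟩
  rcases le_or_gt ‖z‖ R with h | h
  · exact le_trans (hC₀ z (by
      simp only [Set.mem_diff, mem_closedBall, mem_ball, dist_zero_right, not_lt]
      exact ⟨h, hz⟩)) (le_max_left _ _)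
  · have := hM ‖z‖ (le_trans (le_max_left M 1) h.le) z rfl
    simp only [mem_closedBall, dist_eq_norm] at this
    calc ‖v z‖ = ‖L + (v z - L)‖ := by ring_nf
    _ ≤ ‖L‖ + ‖v z - L‖ := norm_add_le _ _
    _ ≤ ‖L‖ + 1 := by linarith [this]
    _ ≤ max C₀ (‖L‖ + 1) := le_max_right _ _

theorem coeff_zero_of_neg (u : ℂ → ℂ)
    (huc : ContinuousOn u (closedBall 0 1))
    (hud : DifferentiableOn ℂ u (ball 0 1)) (k : ℤ) (hk : k < 0) :
    (∮ z in C(0, 1), z ^ (-k - 1) * u z) = 0 := by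
  have he : (-k - 1 : ℤ) = ((-k - 1).toNat : ℤ) := (Int.toNat_of_nonneg (by omega)).symm
  set m : ℕ := (-k - 1).toNat
  have hfun : ∀ z : ℂ, z ^ (-k - 1 : ℤ) * u z = z ^ m * u z := fun z => by
    rw [he, zpow_natCast]
  simp only [hfun]
  refine Complex.circleIntegral_eq_zero_of_differentiable_on_off_countable zero_le_one
    Set.countable_empty (((continuous_pow m).continuousOn).mul huc) fun z hz => ?_
  exact (differentiableAt_pow m).mul
    (hud.differentiableAt (isOpen_ball.mem_nhds hz.1))

theorem coeff_zero_of_small (v : ℂ → ℂ)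
    (hvc : ContinuousOn v {z : ℂ | 1 ≤ ‖z‖})
    (hvd : DifferentiableOn ℂ v {z : ℂ | 1 < ‖z‖})
    (hC : ∃ C : ℝ, 0 ≤ C ∧ ∀ z : ℂ, 1 ≤ ‖z‖ → ‖v z‖ ≤ C)
    (e : ℤ) (he : e < -1) :
    (∮ z in C(0, 1), z ^ e * v z) = 0 := by
  obtain ⟨C, hC0, hCb⟩ := hC
  have hopen : IsOpen {z : ℂ | 1 < ‖z‖} := isOpen_lt continuous_const continuous_norm
  have hJ : ∀ R : ℝ, 1 ≤ R →
      (∮ z in C(0, R), z ^ e * v z) = ∮ z in C(0, 1), z ^ e * v z := by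
    intro R hR
    refine Complex.circleIntegral_eq_of_differentiable_on_annulus_off_countable one_pos hR
      Set.countable_empty ?_ ?_
    · have hsub : closedBall (0:ℂ) R \ ball (0:ℂ) 1 ⊆ {z : ℂ | 1 ≤ ‖z‖} := by
        intro z hz
        simp only [Set.mem_diff, mem_closedBall, mem_ball, dist_zero_right, not_lt,
          Set.mem_setOf_eq] at hz ⊢
        exact hz.2
      refine ContinuousOn.mul ((continuousOn_zpow₀ e).mono ?_) (hvc.mono hsub)
      intro z hz
      have h1 : (1:ℝ) ≤ ‖z‖ := hsub hz
      simp only [Set.mem_compl_iff, Set.mem_singleton_iff]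
      intro h0
      rw [h0] at h1; norm_num at h1
    · intro z hz
      simp only [Set.mem_diff, mem_ball, mem_closedBall, dist_zero_right, not_le,
        Set.mem_empty_iff_false, not_false_iff, and_true] at hz
      have h1 : (1:ℝ) < ‖z‖ := hz.2
      have hz0 : z ≠ 0 := by intro h0; rw [h0] at h1; norm_num at h1
      exact (differentiableAt_zpow.2 (Or.inl hz0)).mul
        (hvd.differentiableAt (hopen.mem_nhds h1))
  have hbound : ∀ R : ℝ, 1 ≤ R →
      ‖∮ z in C(0, 1), z ^ e * v z‖ ≤ 2 * Real.pi * C * R ^ (e + 1) := by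
    intro R hR
    have hRpos : (0:ℝ) < R := lt_of_lt_of_le one_pos hR
    rw [← hJ R hR]
    have hb : ∀ z ∈ sphere (0:ℂ) R, ‖z ^ e * v z‖ ≤ C * R ^ e := by
      intro z hz
      rw [mem_sphere_zero_iff_norm] at hz
      rw [norm_mul, norm_zpow, hz]
      have hvz : ‖v z‖ ≤ C := hCb z (hz ▸ hR)
      calc R ^ e * ‖v z‖ ≤ R ^ e * C :=
            mul_le_mul_of_nonneg_left hvz (by positivity)
        _ = C * R ^ e := mul_comm _ _
    calc ‖∮ z in C(0, R), z ^ e * v z‖ ≤ 2 * Real.pi * R * (C * R ^ e) := by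
          simpa [abs_of_pos hRpos] using
            circleIntegral.norm_integral_le_of_norm_le_const hRpos.le hb
      _ = 2 * Real.pi * C * R ^ (e + 1) := by
          rw [zpow_add₀ hRpos.ne', zpow_one]; ring
  have hlim : Tendsto (fun R : ℝ => 2 * Real.pi * C * R ^ (e + 1)) atTop (nhds 0) := by
    simpa using (tendsto_zpow_atTop_zero (by omega : e + 1 < 0)).const_mul (2 * Real.pi * C)
  have : ‖∮ z in C(0, 1), z ^ e * v z‖ ≤ 0 :=
    ge_of_tendsto hlim (eventually_atTop.2 ⟨1, fun R hR => hbound R hR⟩)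
  simpa using le_antisymm this (norm_nonneg _)
theorem exists_poly (u v : ℂ → ℂ) (L : ℂ) (N : ℤ)
    (huc : ContinuousOn u (closedBall 0 1))
    (hud : DifferentiableOn ℂ u (ball 0 1))
    (hvc : ContinuousOn v {z : ℂ | 1 ≤ ‖z‖})
    (hvd : DifferentiableOn ℂ v {z : ℂ | 1 < ‖z‖})
    (hvl : Tendsto v (comap (fun z : ℂ => ‖z‖) atTop) (nhds L))
    (hbd : ∀ z : ℂ, ‖z‖ = 1 → u z = z ^ N * v z) :
    ∃ (M : ℕ) (a : ℕ → ℂ), ∀ z ∈ closedBall (0:ℂ) 1,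
      u z = ∑ m ∈ Finset.range M, a m * z ^ m := by
  have h2piI : (2 * (Real.pi:ℂ) * I) ≠ 0 := by
    simp [Real.pi_ne_zero, I_ne_zero]
  have hsph : ∀ z ∈ sphere (0:ℂ) 1, ‖z‖ = 1 := fun z hz =>
    mem_sphere_zero_iff_norm.1 hz
  have hsph0 : ∀ z ∈ sphere (0:ℂ) 1, z ≠ 0 := fun z hz h0 => by
    have := hsph z hz; rw [h0] at this; norm_num at this
  set c : ℤ → ℂ := fun k => ∮ z in C(0, 1), z ^ (-k - 1) * u z with hc
  -- vanishing for k < 0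
  have hneg : ∀ k : ℤ, k < 0 → c k = 0 := fun k hk =>
    coeff_zero_of_neg u huc hud k hk
  -- vanishing for k > N
  have hbig : ∀ k : ℤ, N < k → c k = 0 := by
    intro k hk
    have hcongr : c k = ∮ z in C(0, 1), z ^ (N - k - 1) * v z := by
      refine circleIntegral.integral_congr zero_le_one fun z hz => ?_
      have hz1 := hsph z hz
      have hz0 := hsph0 z hz
      rw [hbd z hz1, show N - k - 1 = (-k - 1) + N by ring, zpow_add₀ hz0]
      ring
    rw [hcongr]
    exact coeff_zero_of_small v hvc hvd (bounded_of_tendsto v L hvc hvl) _ (by omega)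
  -- the candidate polynomial
  set M₀ : ℕ := N.toNat + 1 with hM₀
  set a : ℕ → ℂ := fun m => (2 * (Real.pi:ℂ) * I)⁻¹ * c (m : ℤ) with ha
  set p : ℂ → ℂ := fun z => ∑ m ∈ Finset.range M₀, a m * z ^ m with hp
  have hpcont : Continuous p := by
    exact continuous_finset_sum _ fun m _ => continuous_const.mul (continuous_pow m)
  -- single power integrals
  have hzpow : ∀ e : ℤ, (∮ z in C(0, 1), z ^ e) =
      if e = -1 then 2 * (Real.pi:ℂ) * I else 0 := by
    intro e
    rcases eq_or_ne e (-1) with rfl | he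
    · rw [if_pos rfl]
      have := circleIntegral.integral_sub_inv_of_mem_ball
        (c := (0:ℂ)) (w := 0) (R := 1) (mem_ball_self one_pos)
      simpa [zpow_neg_one] using this
    · rw [if_neg he]
      have := circleIntegral.integral_sub_zpow_of_ne he 0 0 1
      simpa using this
  -- integral of p against powers
  have hpint : ∀ k : ℤ, (∮ z in C(0, 1), z ^ (-k - 1) * p z) =
      if 0 ≤ k ∧ k < (M₀:ℤ) then c k else 0 := by
    intro k
    have hcongr : (∮ z in C(0, 1), z ^ (-k - 1) * p z) =
        ∮ z in C(0, 1), ∑ m ∈ Finset.range M₀, a m * z ^ ((m:ℤ) - k - 1) := by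
      refine circleIntegral.integral_congr zero_le_one fun z hz => ?_
      have hz0 := hsph0 z hz
      rw [hp]
      simp only
      rw [Finset.mul_sum]
      refine Finset.sum_congr rfl fun m _ => ?_
      rw [show (m:ℤ) - k - 1 = (-k - 1) + (m:ℤ) by ring, zpow_add₀ hz0, zpow_natCast]
      ring
    rw [hcongr, circleIntegral_finset_sum _ _ (fun m _ => ?_)]
    swap
    · refine ContinuousOn.circleIntegrable zero_le_one
        (continuousOn_const.mul ((continuousOn_zpow₀ _).mono ?_))
      intro z hz
      exact hsph0 z hz
    have hterm : ∀ m ∈ Finset.range M₀,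
        (∮ z in C(0, 1), a m * z ^ ((m:ℤ) - k - 1)) =
        if (m:ℤ) = k then a m * (2 * (Real.pi:ℂ) * I) else 0 := by
      intro m _
      rw [circleIntegral.integral_const_mul, hzpow]
      rcases eq_or_ne ((m:ℤ)) k with h | h
      · rw [if_pos h, if_pos (by omega)]
      · rw [if_neg (by omega), if_neg h, mul_zero]
    rw [Finset.sum_congr rfl hterm]
    by_cases hk : 0 ≤ k ∧ k < (M₀:ℤ)
    · rw [if_pos hk]
      have hmem : k.toNat ∈ Finset.range M₀ := Finset.mem_range.2 (by omega)
      rw [Finset.sum_eq_single k.toNat]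
      · rw [if_pos (by omega), ha]
        simp only
        rw [show ((k.toNat:ℤ)) = k by omega]
        field_simp
      · intro m _ hm
        rw [if_neg (by omega)]
      · intro h; exact absurd hmem h
    · rw [if_neg hk]
      refine Finset.sum_eq_zero fun m hm => ?_
      rw [Finset.mem_range] at hm
      rw [if_neg (by omega)]
  -- all coefficients of u - p vanish
  set w : ℂ → ℂ := fun z => u z - p z with hw
  have hwc : ContinuousOn w (closedBall 0 1) := huc.sub hpcont.continuousOn
  have hpdiff : Differentiable ℂ p := by
    refine Differentiable.fun_sum fun m _ => ((differentiable_const _).mul (differentiable_pow m))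
  have hwd : DifferentiableOn ℂ w (ball 0 1) := hud.sub hpdiff.differentiableOn
  have hall : ∀ k : ℤ, (∮ z in C(0, 1), z ^ (-k - 1) * w z) = 0 := by
    intro k
    have hint1 : CircleIntegrable (fun z : ℂ => z ^ (-k-1) * u z) 0 1 :=
      ContinuousOn.circleIntegrable zero_le_one
        (((continuousOn_zpow₀ _).mono (fun z hz => hsph0 z hz)).mul
          (huc.mono sphere_subset_closedBall))
    have hint2 : CircleIntegrable (fun z : ℂ => z ^ (-k-1) * p z) 0 1 :=
      ContinuousOn.circleIntegrable zero_le_one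
        (((continuousOn_zpow₀ _).mono (fun z hz => hsph0 z hz)).mul
          hpcont.continuousOn)
    have : (∮ z in C(0, 1), z ^ (-k - 1) * w z) =
        (∮ z in C(0, 1), z ^ (-k-1) * u z) - ∮ z in C(0, 1), z ^ (-k-1) * p z := by
      rw [← circleIntegral.integral_sub hint1 hint2]
      refine circleIntegral.integral_congr zero_le_one fun z hz => ?_
      simp only [hw]; ring
    rw [this, hpint k]
    by_cases hk : 0 ≤ k ∧ k < (M₀:ℤ)
    · rw [if_pos hk]; exact sub_self _
    · rw [if_neg hk, sub_zero]
      rcases lt_or_ge k 0 with h | h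
      · exact hneg k h
      · exact hbig k (by omega)
  -- w vanishes on the ball
  have hball : ∀ y ∈ ball (0:ℂ) 1, w y = 0 := by
    intro y hy
    have hwint : CircleIntegrable w 0 1 :=
      ContinuousOn.circleIntegrable zero_le_one (hwc.mono sphere_subset_closedBall)
    have habs : ‖y‖ < 1 := by
      simpa [mem_ball, dist_zero_right] using hy
    have hs := hasSum_two_pi_I_cauchyPowerSeries_integral (c := 0) hwint habs
    have hterm : (fun n : ℕ => ∮ z in C(0,1), (y / (z - 0)) ^ n • (z - 0)⁻¹ • w z)
        = fun n : ℕ => 0 := by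
      funext m
      have hcongr : (∮ z in C(0,1), (y / (z - 0)) ^ m • (z - 0)⁻¹ • w z)
          = ∮ z in C(0,1), y ^ m * (z ^ (-(m:ℤ) - 1) * w z) := by
        refine circleIntegral.integral_congr zero_le_one fun z hz => ?_
        have hz0 := hsph0 z hz
        simp only [sub_zero, smul_eq_mul, div_pow]
        rw [show -(m:ℤ) - 1 = -(((m+1:ℕ) :ℤ)) by push_cast; ring, zpow_neg, zpow_natCast,
          pow_succ]
        field_simp
      rw [hcongr, circleIntegral.integral_const_mul,
        show -(m:ℤ) - 1 = -((m:ℤ)) - 1 by ring, hall (m:ℤ), mul_zero]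
    rw [hterm] at hs
    have hS : (∮ z in C(0,1), (z - (0 + y))⁻¹ • w z) = 0 :=
      hs.unique hasSum_zero
    have hcau := Complex.two_pi_I_inv_smul_circleIntegral_sub_inv_smul_of_differentiable_on_off_countable
      (s := ∅) Set.countable_empty hy hwc (fun x hx => hwd.differentiableAt
        (isOpen_ball.mem_nhds hx.1))
    rw [zero_add] at hS
    rw [hS] at hcau
    simpa using hcau.symm
  -- conclude on the closed ball by continuity
  refine ⟨M₀, a, fun z₀ hz₀ => ?_⟩
  have hz₀' : z₀ ∈ closure (ball (0:ℂ) 1) := by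
    rwa [closure_ball (0:ℂ) one_ne_zero]
  haveI : (nhdsWithin z₀ (ball (0:ℂ) 1)).NeBot :=
    mem_closure_iff_nhdsWithin_neBot.1 hz₀'
  have h1 : Tendsto w (nhdsWithin z₀ (ball (0:ℂ) 1)) (nhds (w z₀)) :=
    (hwc z₀ hz₀).mono ball_subset_closedBall
  have h2 : Tendsto w (nhdsWithin z₀ (ball (0:ℂ) 1)) (nhds 0) :=
    tendsto_const_nhds.congr' (eventually_nhdsWithin_of_forall
      fun y hy => (hball y hy).symm)
  have : w z₀ = 0 := tendsto_nhds_unique h1 h2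
  have := sub_eq_zero.1 this
  simpa [hp] using this

theorem circleParam_norm (t : ℝ) : ‖circleParam t‖ = 1 := by
  rw [circleParam, Complex.norm_exp]
  have : (2 * (Real.pi : ℂ) * Complex.I * (t : ℂ)).re = 0 := by
    simp [Complex.mul_re, Complex.mul_im]
  rw [this, Real.exp_zero]

theorem circleParam_contDiff : ContDiff ℝ (⊤ : ℕ∞) circleParam := by
  have h1 : ContDiff ℝ (⊤ : ℕ∞) fun t : ℝ => 2 * (Real.pi : ℂ) * Complex.I * (t : ℂ) :=
    contDiff_const.mul Complex.ofRealCLM.contDiff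
  exact (Complex.contDiff_exp (𝕜 := ℝ)).comp h1

theorem circleParam_zpow_contDiff (m : ℤ) :
    ContDiff ℝ (⊤ : ℕ∞) fun t => circleParam t ^ m := by
  have : (fun t => circleParam t ^ m) =
      fun t : ℝ => Complex.exp ((m : ℂ) * (2 * (Real.pi : ℂ) * Complex.I * (t : ℂ))) := by
    funext t
    rw [circleParam, Complex.exp_int_mul]
  rw [this]
  have h1 : ContDiff ℝ (⊤ : ℕ∞) fun t : ℝ => (m:ℂ) * (2 * (Real.pi : ℂ) * Complex.I * (t : ℂ)) :=
    contDiff_const.mul (contDiff_const.mul Complex.ofRealCLM.contDiff)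
  exact (Complex.contDiff_exp (𝕜 := ℝ)).comp h1


end aux

/-- If a loop `f : 𝕊 → GL_n(ℂ)` has two Birkhoff decompositions
`f = A₊ D A₋ = Ã₊ D̃ Ã₋` and the boundary restrictions `A₊|𝕊`, `A₋|𝕊` are smooth, then
also `Ã₊|𝕊` and `Ã₋|𝕊` are smooth.  Smoothness of a map on `𝕊` is encoded via the smooth
parametrization `t ↦ e^{2πit}` of the circle. -/
theorem stmt_16 (n : ℕ) (f : ℂ → Matrix (Fin n) (Fin n) ℂ)
    (Ap Atp Am Atm : ℂ → Matrix (Fin n) (Fin n) ℂ)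
    (Linf Ltinf : Matrix (Fin n) (Fin n) ℂ)
    (κ ν : Fin n → ℤ) (hκ : Antitone κ) (hν : Antitone ν)
    (hfu : ∀ z : ℂ, ‖z‖ = 1 → IsUnit (f z))
    (hApc : ∀ i j, ContinuousOn (fun z => Ap z i j) (closedBall 0 1))
    (hApd : ∀ i j, DifferentiableOn ℂ (fun z => Ap z i j) (ball 0 1))
    (hApu : ∀ z ∈ closedBall (0 : ℂ) 1, IsUnit (Ap z))
    (hAtpc : ∀ i j, ContinuousOn (fun z => Atp z i j) (closedBall 0 1))
    (hAtpd : ∀ i j, DifferentiableOn ℂ (fun z => Atp z i j) (ball 0 1))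
    (hAtpu : ∀ z ∈ closedBall (0 : ℂ) 1, IsUnit (Atp z))
    (hAmc : ∀ i j, ContinuousOn (fun z => Am z i j) {z : ℂ | 1 ≤ ‖z‖})
    (hAmd : ∀ i j, DifferentiableOn ℂ (fun z => Am z i j) {z : ℂ | 1 < ‖z‖})
    (hAmu : ∀ z : ℂ, 1 ≤ ‖z‖ → IsUnit (Am z))
    (hAml : ∀ i j, Tendsto (fun z => Am z i j)
      (comap (fun z : ℂ => ‖z‖) atTop) (nhds (Linf i j)))
    (hLu : IsUnit Linf)
    (hAtmc : ∀ i j, ContinuousOn (fun z => Atm z i j) {z : ℂ | 1 ≤ ‖z‖})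
    (hAtmd : ∀ i j, DifferentiableOn ℂ (fun z => Atm z i j) {z : ℂ | 1 < ‖z‖})
    (hAtmu : ∀ z : ℂ, 1 ≤ ‖z‖ → IsUnit (Atm z))
    (hAtml : ∀ i j, Tendsto (fun z => Atm z i j)
      (comap (fun z : ℂ => ‖z‖) atTop) (nhds (Ltinf i j)))
    (hLtu : IsUnit Ltinf)
    (heq : ∀ z : ℂ, ‖z‖ = 1 → f z = Ap z * diagZ n κ z * Am z)
    (heqt : ∀ z : ℂ, ‖z‖ = 1 → f z = Atp z * diagZ n ν z * Atm z)
    (hAps : ∀ i j, ContDiff ℝ (⊤ : ℕ∞) fun t : ℝ => Ap (circleParam t) i j)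
    (hAms : ∀ i j, ContDiff ℝ (⊤ : ℕ∞) fun t : ℝ => Am (circleParam t) i j) :
    (∀ i j, ContDiff ℝ (⊤ : ℕ∞) fun t : ℝ => Atp (circleParam t) i j) ∧
    (∀ i j, ContDiff ℝ (⊤ : ℕ∞) fun t : ℝ => Atm (circleParam t) i j) := by
  classical
  set S : Set ℂ := {z : ℂ | 1 ≤ ‖z‖} with hS
  set So : Set ℂ := {z : ℂ | 1 < ‖z‖} with hSo
  have hSoS : So ⊆ S := fun z hz => le_of_lt (by exact hz : (1:ℝ) < ‖z‖)
  -- det facts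
  have hAmdet : ∀ z ∈ S, (Am z).det ≠ 0 := fun z hz =>
    ((Matrix.isUnit_iff_isUnit_det _).1 (hAmu z hz)).ne_zero
  have hAtpdet : ∀ z ∈ closedBall (0:ℂ) 1, (Atp z).det ≠ 0 := fun z hz =>
    ((Matrix.isUnit_iff_isUnit_det _).1 (hAtpu z hz)).ne_zero
  have hApdet : ∀ z ∈ closedBall (0:ℂ) 1, (Ap z).det ≠ 0 := fun z hz =>
    ((Matrix.isUnit_iff_isUnit_det _).1 (hApu z hz)).ne_zero
  have hLdet : Linf.det ≠ 0 := ((Matrix.isUnit_iff_isUnit_det _).1 hLu).ne_zero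
  -- entries of (Am z)⁻¹
  have hAmic : ∀ i j, ContinuousOn (fun z => (Am z)⁻¹ i j) S := by
    intro i j
    simp only [inv_entry]
    exact ((contOn_det hAmc).inv₀ hAmdet).mul (contOn_adjugate hAmc i j)
  have hAmid : ∀ i j, DifferentiableOn ℂ (fun z => (Am z)⁻¹ i j) So := by
    intro i j
    simp only [inv_entry]
    exact (DifferentiableOn.inv (diffOn_det hAmd) fun z hz => hAmdet z (hSoS hz)).mul
      (diffOn_adjugate hAmd i j)
  have hAmtendsto : Tendsto Am (comap (fun z : ℂ => ‖z‖) atTop) (nhds Linf) :=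
    tendsto_pi_nhds.2 fun i => tendsto_pi_nhds.2 fun j => hAml i j
  have hAmil : ∀ i j, Tendsto (fun z => (Am z)⁻¹ i j)
      (comap (fun z : ℂ => ‖z‖) atTop) (nhds (Linf⁻¹ i j)) := by
    intro i j
    simp only [inv_entry]
    have hdet : Tendsto (fun z => (Am z).det)
        (comap (fun z : ℂ => ‖z‖) atTop) (nhds Linf.det) :=
      ((continuous_id.matrix_det).tendsto Linf).comp hAmtendsto
    have hadjm : Tendsto (fun z => (Am z).adjugate)
        (comap (fun z : ℂ => ‖z‖) atTop) (nhds Linf.adjugate) :=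
      ((continuous_id.matrix_adjugate).tendsto Linf).comp hAmtendsto
    have hadj : Tendsto (fun z => (Am z).adjugate i j)
        (comap (fun z : ℂ => ‖z‖) atTop) (nhds (Linf.adjugate i j)) :=
      tendsto_pi_nhds.1 (tendsto_pi_nhds.1 hadjm i) j
    exact (hdet.inv₀ hLdet).mul hadj
  -- the matrices B and G
  set B : ℂ → Matrix (Fin n) (Fin n) ℂ := fun z => Atm z * (Am z)⁻¹ with hB
  set G : ℂ → Matrix (Fin n) (Fin n) ℂ := fun z => (Atp z)⁻¹ * Ap z with hG
  have hBc : ∀ i j, ContinuousOn (fun z => B z i j) S := by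
    intro i j
    simp only [hB, Matrix.mul_apply]
    exact continuousOn_finset_sum _ fun l _ => (hAtmc i l).mul (hAmic l j)
  have hBd : ∀ i j, DifferentiableOn ℂ (fun z => B z i j) So := by
    intro i j
    simp only [hB, Matrix.mul_apply]
    exact DifferentiableOn.fun_sum fun l _ => (hAtmd i l).mul (hAmid l j)
  have hBl : ∀ i j, Tendsto (fun z => B z i j)
      (comap (fun z : ℂ => ‖z‖) atTop) (nhds ((Ltinf * Linf⁻¹) i j)) := by
    intro i j
    simp only [hB, Matrix.mul_apply]
    exact tendsto_finset_sum _ fun l _ => (hAtml i l).mul (hAmil l j)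
  have hGc : ∀ i j, ContinuousOn (fun z => G z i j) (closedBall 0 1) := by
    intro i j
    simp only [hG, Matrix.mul_apply, inv_entry]
    exact continuousOn_finset_sum _ fun l _ =>
      (((contOn_det hAtpc).inv₀ hAtpdet).mul (contOn_adjugate hAtpc i l)).mul (hApc l j)
  have hGd : ∀ i j, DifferentiableOn ℂ (fun z => G z i j) (ball 0 1) := by
    intro i j
    simp only [hG, Matrix.mul_apply, inv_entry]
    exact DifferentiableOn.fun_sum fun l _ =>
      ((DifferentiableOn.inv (diffOn_det hAtpd)
        (fun z hz => hAtpdet z (ball_subset_closedBall hz))).mul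
        (diffOn_adjugate hAtpd i l)).mul (hApd l j)
  -- key matrix identity on the circle
  have hkey : ∀ z : ℂ, ‖z‖ = 1 →
      G z * diagZ n κ z = diagZ n ν z * B z := by
    intro z hz
    have hzc : z ∈ closedBall (0:ℂ) 1 := by
      simp only [mem_closedBall, dist_zero_right, hz]; norm_num
    have h := (heq z hz).symm.trans (heqt z hz)
    have hAmd1 : IsUnit (Am z).det := (Matrix.isUnit_iff_isUnit_det _).1 (hAmu z hz.ge)
    have hAtpd1 : IsUnit (Atp z).det := (Matrix.isUnit_iff_isUnit_det _).1 (hAtpu z hzc)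
    calc G z * diagZ n κ z
        = (Atp z)⁻¹ * (Ap z * diagZ n κ z * Am z) * (Am z)⁻¹ := by
          simp only [hG, Matrix.mul_assoc]
          rw [Matrix.mul_nonsing_inv _ hAmd1, Matrix.mul_one]
      _ = (Atp z)⁻¹ * (Atp z * diagZ n ν z * Atm z) * (Am z)⁻¹ := by rw [h]
      _ = diagZ n ν z * B z := by
          simp only [hB, Matrix.mul_assoc]
          rw [← Matrix.mul_assoc ((Atp z)⁻¹) (Atp z), Matrix.nonsing_inv_mul _ hAtpd1,
            Matrix.one_mul]
  -- entrywise boundary identities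
  have hGB : ∀ z : ℂ, ‖z‖ = 1 → ∀ i j, G z i j = z ^ (ν i - κ j) * B z i j := by
    intro z hz i j
    have hz0 : z ≠ 0 := by intro h0; rw [h0] at hz; norm_num at hz
    have h := congrFun (congrFun (hkey z hz) i) j
    simp only [diagZ, Matrix.mul_diagonal, Matrix.diagonal_mul] at h
    have hzk : z ^ κ j * z ^ (-κ j) = 1 := by
      rw [← zpow_add₀ hz0]; simp
    calc G z i j = G z i j * (z ^ κ j * z ^ (-κ j)) := by rw [hzk, mul_one]
      _ = (z ^ ν i * B z i j) * z ^ (-κ j) := by rw [← mul_assoc, h]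
      _ = z ^ (ν i - κ j) * B z i j := by
          rw [show ν i - κ j = ν i + (-κ j) by ring, zpow_add₀ hz0]; ring
  have hBG : ∀ z : ℂ, ‖z‖ = 1 → ∀ i j, B z i j = z ^ (κ j - ν i) * G z i j := by
    intro z hz i j
    have hz0 : z ≠ 0 := by intro h0; rw [h0] at hz; norm_num at hz
    rw [hGB z hz i j, ← mul_assoc, ← zpow_add₀ hz0]
    simp
  -- polynomial representation of G on the closed ball
  have hpoly : ∀ i j, ∃ (M : ℕ) (a : ℕ → ℂ), ∀ z ∈ closedBall (0:ℂ) 1,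
      G z i j = ∑ m ∈ Finset.range M, a m * z ^ m := fun i j =>
    exists_poly _ _ ((Ltinf * Linf⁻¹) i j) (ν i - κ j) (hGc i j) (hGd i j)
      (hBc i j) (hBd i j) (hBl i j) (fun z hz => hGB z hz i j)
  choose MM aa hMa using hpoly
  have hmemc : ∀ t : ℝ, circleParam t ∈ closedBall (0:ℂ) 1 := fun t => by
    simp [mem_closedBall, dist_zero_right, circleParam_norm t]
  have sG : ∀ i j, ContDiff ℝ (⊤ : ℕ∞) fun t => G (circleParam t) i j := by
    intro i j
    have : (fun t => G (circleParam t) i j) =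
        fun t => ∑ m ∈ Finset.range (MM i j), aa i j m * circleParam t ^ m :=
      funext fun t => hMa i j _ (hmemc t)
    rw [this]
    exact ContDiff.sum fun m _ => contDiff_const.mul (circleParam_contDiff.pow m)
  have hdetG : ∀ t : ℝ, (G (circleParam t)).det ≠ 0 := by
    intro t
    have hzc := hmemc t
    have h1 : IsUnit (Atp (circleParam t))⁻¹.det :=
      Matrix.isUnit_nonsing_inv_det _ ((Matrix.isUnit_iff_isUnit_det _).1 (hAtpu _ hzc))
    simp only [hG, Matrix.det_mul]
    exact mul_ne_zero h1.ne_zero (hApdet _ hzc)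
  constructor
  · -- smoothness of Atp on the circle
    intro i j
    have key : (fun t => Atp (circleParam t) i j) = fun t =>
        ∑ l, Ap (circleParam t) i l *
          (((G (circleParam t)).det)⁻¹ * (G (circleParam t)).adjugate l j) := by
      funext t
      have hzc := hmemc t
      have hAtpd1 : IsUnit (Atp (circleParam t)).det :=
        (Matrix.isUnit_iff_isUnit_det _).1 (hAtpu _ hzc)
      have hGdet1 : IsUnit (G (circleParam t)).det := isUnit_iff_ne_zero.2 (hdetG t)
      have h1 : Atp (circleParam t) * G (circleParam t) = Ap (circleParam t) := by
        simp only [hG]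
        rw [← Matrix.mul_assoc, Matrix.mul_nonsing_inv _ hAtpd1, Matrix.one_mul]
      have h2 : Atp (circleParam t) = Ap (circleParam t) * (G (circleParam t))⁻¹ := by
        rw [← h1, Matrix.mul_assoc, Matrix.mul_nonsing_inv _ hGdet1, Matrix.mul_one]
      calc Atp (circleParam t) i j
          = (Ap (circleParam t) * (G (circleParam t))⁻¹) i j := by rw [← h2]
        _ = ∑ l, Ap (circleParam t) i l * (G (circleParam t))⁻¹ l j := Matrix.mul_apply
        _ = _ := by
            refine Finset.sum_congr rfl fun l _ => ?_
            rw [inv_entry]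
    rw [key]
    exact ContDiff.sum fun l _ => (hAps i l).mul
      (((contDiff_det sG).inv hdetG).mul (contDiff_adjugate sG l j))
  · -- smoothness of Atm on the circle
    intro i j
    have key : (fun t => Atm (circleParam t) i j) = fun t =>
        ∑ l, (circleParam t ^ (κ l - ν i) * G (circleParam t) i l) *
          Am (circleParam t) l j := by
      funext t
      have hz : ‖circleParam t‖ = 1 := circleParam_norm t
      have hAmd1 : IsUnit (Am (circleParam t)).det :=
        (Matrix.isUnit_iff_isUnit_det _).1 (hAmu _ hz.ge)
      have h1 : Atm (circleParam t) = B (circleParam t) * Am (circleParam t) := by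
        simp only [hB]
        rw [Matrix.mul_assoc, Matrix.nonsing_inv_mul _ hAmd1, Matrix.mul_one]
      calc Atm (circleParam t) i j
          = (B (circleParam t) * Am (circleParam t)) i j := by rw [← h1]
        _ = ∑ l, B (circleParam t) i l * Am (circleParam t) l j := Matrix.mul_apply
        _ = _ := by
            refine Finset.sum_congr rfl fun l _ => ?_
            rw [hBG _ hz i l]
    rw [key]
    exact ContDiff.sum fun l _ =>
      ((circleParam_zpow_contDiff _).mul (sG i l)).mul (hAms l j)
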